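/- Let N ≥ 1 be an integer, ν > 0 real, τ ∈ (0,1), and let 0 ≤ k ≤ N−1 be an integer. Then for every real x < 0 one has 0 ≤ 𝓘_k(x) ≤ 1. -/

import Mathlib

/-!
With `t = τ²`, `w = a·x` and `μ = ν + 2k`, `𝓘_k(x)` is the partial sum `∑_{j<N-k} tʲ L_j^μ(w)`
of the Laguerre generating function divided by its full sum `(1 - t)^{-μ-1} e^{-tw/(1-t)}`.
For `w ≤ 0` every `L_j^μ(w)` is a sum of nonnegative terms, which gives `0 ≤ 𝓘_k(x)`. Exchanging
the two summations, the coefficient of `(-w)ⁱ/i!` becomes a partial sum of the binomial series of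
`tⁱ (1 - t)^{-μ-i-1}`, hence is at most its full sum; what remains is a partial sum of the
exponential series of `-tw/(1-t)`, bounded by the exponential itself. So the partial sum is at most
the full sum, i.e. `𝓘_k(x) ≤ 1`.
-/

open Finset Filter

/-- Generalized Laguerre polynomial `L_j^ν(z)`. -/
noncomputable def Lag (ν : ℝ) (j : ℕ) (z : ℂ) : ℂ :=
  ∑ k ∈ range (j + 1),
    ((Real.Gamma ((j : ℝ) + ν + 1) /
        (((j - k).factorial : ℝ) * Real.Gamma (ν + (k : ℝ) + 1)) : ℝ) : ℂ) *
      (-z) ^ k / ((k.factorial : ℕ) : ℂ)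

/-- The partial sum `𝓘_k(z) = (1−τ²)^{ν+2k+1}·e^{τ√ν·z}·∑_{j=0}^{N−1−k} τ^{2j}·L_j^{ν+2k}(a·z)`
with `a = (1−τ²)√ν/τ`. -/
noncomputable def Ical (N : ℕ) (ν τ : ℝ) (k : ℕ) (z : ℂ) : ℂ :=
  (((1 - τ ^ 2) ^ (ν + 2 * k + 1) : ℝ) : ℂ) *
    Complex.exp (((τ * Real.sqrt ν : ℝ) : ℂ) * z) *
    ∑ j ∈ range (N - k),
      ((τ ^ (2 * j) : ℝ) : ℂ) * Lag (ν + 2 * k) j ((((1 - τ ^ 2) * Real.sqrt ν / τ : ℝ) : ℂ) * z)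

lemma Real.Gamma_add_nat_eq_ascPochhammer_mul {α : ℝ} (hα : 0 < α) (n : ℕ) :
    Real.Gamma (α + n) = (ascPochhammer ℝ n).eval α * Real.Gamma α := by
  induction n with
  | zero => simp
  | succ n ih =>
    rw [Nat.cast_succ, ← add_assoc, Real.Gamma_add_one (by positivity), ih,
      ascPochhammer_succ_right]
    simp only [Polynomial.eval_mul, Polynomial.eval_add, Polynomial.eval_X,
      Polynomial.eval_natCast]
    ring

lemma Real.choose_add_sub_one_eq_Gamma_div {α : ℝ} (hα : 0 < α) (n : ℕ) :
    Ring.choose (α + n - 1) n = Real.Gamma (α + n) / (n.factorial * Real.Gamma α) := by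
  rw [Real.Gamma_add_nat_eq_ascPochhammer_mul hα, ← Ring.multichoose_eq,
    mul_div_mul_right _ _ (Real.Gamma_pos_of_pos hα).ne', eq_div_iff (by positivity), mul_comm,
    ← nsmul_eq_mul, Ring.factorial_nsmul_multichoose_eq_ascPochhammer,
    Polynomial.ascPochhammer_smeval_eq_eval]

lemma sum_range_Gamma_div_mul_pow_le {α : ℝ} (hα : 0 < α) {t : ℝ} (ht0 : 0 ≤ t) (ht1 : t < 1)
    (M : ℕ) :
    ∑ m ∈ range M, Real.Gamma (α + m) / (m.factorial * Real.Gamma α) * t ^ m ≤ (1 - t) ^ (-α) := by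
  -- the binomial series of `(1 - t) ^ (-α)` has nonnegative terms
  have hsum : HasSum (fun m : ℕ ↦ t ^ m * Ring.choose (α + m - 1) m) ((1 - t) ^ α)⁻¹ := by
    simpa [FormalMultilinearSeries.ofScalars_apply_eq] using
      (Real.one_div_one_sub_rpow_hasFPowerSeriesOnBall_zero α).hasSum (y := t)
        (by simpa [Real.enorm_eq_ofReal ht0] using ht1)
  simp_rw [← Real.choose_add_sub_one_eq_Gamma_div hα]
  rw [Real.rpow_neg (by linarith)]
  refine (sum_le_hasSum _ (fun m _ ↦ ?_) hsum).trans_eq' (sum_congr rfl fun m _ ↦ mul_comm _ _)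
  rw [Real.choose_add_sub_one_eq_Gamma_div hα]
  have := Real.Gamma_pos_of_pos (show 0 < α + m by positivity)
  have := Real.Gamma_pos_of_pos hα
  positivity

noncomputable def lagCoeff (ν : ℝ) (j i : ℕ) : ℝ :=
  Real.Gamma ((j : ℝ) + ν + 1) / (((j - i).factorial : ℝ) * Real.Gamma (ν + (i : ℝ) + 1))

noncomputable def lagReal (ν : ℝ) (j : ℕ) (w : ℝ) : ℝ :=
  ∑ i ∈ range (j + 1), lagCoeff ν j i * (-w) ^ i / i.factorial

lemma Lag_ofReal (ν : ℝ) (j : ℕ) (w : ℝ) : Lag ν j w = lagReal ν j w := by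
  simp [Lag, lagReal, lagCoeff]

lemma lagCoeff_nonneg {ν : ℝ} (hν : -1 < ν) (j i : ℕ) : 0 ≤ lagCoeff ν j i := by
  have := Real.Gamma_pos_of_pos (show 0 < (j : ℝ) + ν + 1 by linarith [j.cast_nonneg (α := ℝ)])
  have := Real.Gamma_pos_of_pos (show 0 < ν + (i : ℝ) + 1 by linarith [i.cast_nonneg (α := ℝ)])
  unfold lagCoeff
  positivity

lemma lagReal_nonneg {ν : ℝ} (hν : -1 < ν) (j : ℕ) {w : ℝ} (hw : w ≤ 0) : 0 ≤ lagReal ν j w :=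
  sum_nonneg fun i _ ↦ div_nonneg
    (mul_nonneg (lagCoeff_nonneg hν j i) (pow_nonneg (neg_nonneg.2 hw) i)) (by positivity)

lemma sum_Ico_pow_mul_lagCoeff_le {ν : ℝ} (hν : -1 < ν) {t : ℝ} (ht0 : 0 ≤ t) (ht1 : t < 1)
    (i M : ℕ) :
    ∑ j ∈ Ico i M, t ^ j * lagCoeff ν j i ≤ t ^ i * (1 - t) ^ (-(ν + i + 1)) := by
  have hα : 0 < ν + i + 1 := by linarith [i.cast_nonneg (α := ℝ)]
  rw [sum_Ico_eq_sum_range]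
  calc ∑ m ∈ range (M - i), t ^ (i + m) * lagCoeff ν (i + m) i
      = t ^ i * ∑ m ∈ range (M - i),
          Real.Gamma (ν + i + 1 + m) / (m.factorial * Real.Gamma (ν + i + 1)) * t ^ m := by
        rw [mul_sum]
        refine sum_congr rfl fun m _ ↦ ?_
        rw [lagCoeff, Nat.add_sub_cancel_left, pow_add]
        push_cast
        ring_nf
    _ ≤ t ^ i * (1 - t) ^ (-(ν + i + 1)) :=
        mul_le_mul_of_nonneg_left (sum_range_Gamma_div_mul_pow_le hα ht0 ht1 _) (by positivity)

lemma sum_range_pow_mul_lagReal_le {ν : ℝ} (hν : -1 < ν) {t : ℝ} (ht0 : 0 ≤ t) (ht1 : t < 1)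
    {w : ℝ} (hw : w ≤ 0) (M : ℕ) :
    ∑ j ∈ range M, t ^ j * lagReal ν j w ≤
      (1 - t) ^ (-(ν + 1)) * Real.exp (-(t * w) / (1 - t)) := by
  have h1t : 0 < 1 - t := by linarith
  have hw' : 0 ≤ -w := neg_nonneg.2 hw
  have hv : 0 ≤ -(t * w) / (1 - t) := div_nonneg (by nlinarith) h1t.le
  calc ∑ j ∈ range M, t ^ j * lagReal ν j w
      = ∑ i ∈ range M, (∑ j ∈ Ico i M, t ^ j * lagCoeff ν j i) * ((-w) ^ i / i.factorial) := by
        simp only [lagReal, mul_sum, sum_mul, range_eq_Ico]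
        rw [sum_Ico_Ico_comm]
        exact sum_congr rfl fun j _ ↦ sum_congr rfl fun i _ ↦ by ring
    _ ≤ ∑ i ∈ range M, t ^ i * (1 - t) ^ (-(ν + i + 1)) * ((-w) ^ i / i.factorial) :=
        sum_le_sum fun i _ ↦ mul_le_mul_of_nonneg_right
          (sum_Ico_pow_mul_lagCoeff_le hν ht0 ht1 i M) (by positivity)
    _ = (1 - t) ^ (-(ν + 1)) * ∑ i ∈ range M, (-(t * w) / (1 - t)) ^ i / i.factorial := by
        rw [mul_sum]
        refine sum_congr rfl fun i _ ↦ ?_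
        rw [show -(ν + i + 1) = -(ν + 1) - i by ring, Real.rpow_sub_natCast h1t.ne',
          neg_mul_eq_mul_neg, div_pow, mul_pow]
        ring
    _ ≤ (1 - t) ^ (-(ν + 1)) * Real.exp (-(t * w) / (1 - t)) :=
        mul_le_mul_of_nonneg_left (Real.sum_le_exp_of_nonneg hv M) (by positivity)

/-- The partial sum `∑_{j<M} tʲ L_j^ν(w)` of the generating function
`∑ⱼ tʲ L_j^ν(w) = (1 - t)^{-ν-1} e^{-tw/(1-t)}`, divided by its full sum. -/
noncomputable def truncLagGen (ν t w : ℝ) (M : ℕ) : ℝ :=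
  (1 - t) ^ (ν + 1) * Real.exp (t * w / (1 - t)) * ∑ j ∈ range M, t ^ j * lagReal ν j w

lemma truncLagGen_nonneg {ν t w : ℝ} (hν : -1 < ν) (ht0 : 0 ≤ t) (ht1 : t < 1)
    (hw : w ≤ 0) (M : ℕ) : 0 ≤ truncLagGen ν t w M := by
  have h1t : 0 < 1 - t := by linarith
  have := sum_nonneg fun j (_ : j ∈ range M) ↦
    mul_nonneg (pow_nonneg ht0 j) (lagReal_nonneg hν j hw)
  unfold truncLagGen
  positivity

lemma truncLagGen_le_one {ν t w : ℝ} (hν : -1 < ν) (ht0 : 0 ≤ t) (ht1 : t < 1)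
    (hw : w ≤ 0) (M : ℕ) : truncLagGen ν t w M ≤ 1 := by
  have h1t : 0 < 1 - t := by linarith
  calc truncLagGen ν t w M
      ≤ (1 - t) ^ (ν + 1) * Real.exp (t * w / (1 - t)) *
          ((1 - t) ^ (-(ν + 1)) * Real.exp (-(t * w) / (1 - t))) :=
        mul_le_mul_of_nonneg_left (sum_range_pow_mul_lagReal_le hν ht0 ht1 hw M) (by positivity)
    _ = 1 := by
        rw [mul_mul_mul_comm, ← Real.rpow_add h1t, ← Real.exp_add, neg_div]
        simp

lemma Ical_ofReal (N : ℕ) (ν : ℝ) {τ : ℝ} (hτ0 : τ ≠ 0) (hτ1 : τ ^ 2 ≠ 1) (k : ℕ) (x : ℝ) :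
    Ical N ν τ k x =
      truncLagGen (ν + 2 * k) (τ ^ 2) ((1 - τ ^ 2) * Real.sqrt ν / τ * x) (N - k) := by
  have hexp :
      τ * Real.sqrt ν * x = τ ^ 2 * ((1 - τ ^ 2) * Real.sqrt ν / τ * x) / (1 - τ ^ 2) := by
    field_simp [sub_ne_zero.2 hτ1.symm]
  simp only [Ical, truncLagGen, ← Complex.ofReal_mul, Lag_ofReal, ← Complex.ofReal_exp, hexp,
    pow_mul]
  push_cast
  ring_nf

theorem Ical_bounded_on_negative_reals (N : ℕ) (ν : ℝ) (hν : 0 < ν)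
    (τ : ℝ) (hτ : τ ∈ Set.Ioo (0 : ℝ) 1) (k : ℕ)
    (x : ℝ) (hx : x < 0) :
    ∃ y : ℝ, Ical N ν τ k (x : ℂ) = (y : ℂ) ∧ 0 ≤ y ∧ y ≤ 1 := by
  obtain ⟨hτ0, hτ1⟩ := hτ
  have hμ : -1 < ν + 2 * k := by linarith [k.cast_nonneg (α := ℝ)]
  have ht0 : 0 ≤ τ ^ 2 := by positivity
  have ht1 : τ ^ 2 < 1 := by nlinarith
  have hw : (1 - τ ^ 2) * Real.sqrt ν / τ * x ≤ 0 :=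
    mul_nonpos_of_nonneg_of_nonpos (by have := Real.sqrt_nonneg ν; positivity) hx.le
  exact ⟨_, Ical_ofReal N ν hτ0.ne' ht1.ne k x, truncLagGen_nonneg hμ ht0 ht1 hw _,
    truncLagGen_le_one hμ ht0 ht1 hw _⟩
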